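/- arXiv:2503.17884 — 8 statements merged into one kernel-verified Lean document; each statement's English description precedes it below -/
import Mathlib

section
/- Let G ≤ S_d be a transitive permutation group on {1,...,d}. Then there exists a chain of subgroups G = H_0 ≥ H_1 ≥ ... ≥ H_d = {id} such that [H_0 : H_1] = d and [H_i : H_{i+1}] < d for all i = 1, ..., d-1. -/
/-!
Take `H_k` to be the pointwise stabilizer in `G` of `{0, …, k - 1}`. By orbit–stabilizer,
`[H_k : H_{k+1}]` is the size of the `H_k`-orbit of `k`. For `k = 0` this orbit is everything by
transitivity; for `k ≥ 1` every element of `H_k` fixes `0`, so the orbit of `k` misses `0`.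
-/

open MulAction

namespace MulAction

variable {G X : Type*} [Group G] [MulAction G X]

theorem stabilizer_subgroupOf (K : Subgroup G) (x : X) :
    (stabilizer G x).subgroupOf K = stabilizer K x :=
  rfl

theorem relIndex_stabilizer_inf (K : Subgroup G) (x : X) :
    (stabilizer G x ⊓ K).relIndex K = (orbit K x).ncard := by
  rw [Subgroup.inf_relIndex_right, Subgroup.relIndex, stabilizer_subgroupOf, index_stabilizer]

theorem ncard_orbit_lt_of_le_stabilizer [Finite X] {K : Subgroup G} {x y : X}
    (hK : K ≤ stabilizer G y) (hxy : x ≠ y) : (orbit K x).ncard < Nat.card X := by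
  refine Set.ncard_lt_card fun horbit => hxy ?_
  obtain ⟨k, hk⟩ : y ∈ orbit K x := horbit ▸ Set.mem_univ y
  exact smul_left_cancel (k : G) (hk.trans (hK k.2).symm)

theorem fixingSubgroup_insert (x : X) (s : Set X) :
    fixingSubgroup G (insert x s) = stabilizer G x ⊓ fixingSubgroup G s := by
  rw [Set.insert_eq, fixingSubgroup_union]
  congr 1
  ext g
  simp [mem_fixingSubgroup_iff]

theorem fixingSubgroup_univ [FaithfulSMul G X] : fixingSubgroup G (Set.univ : Set X) = ⊥ := by
  ext g
  simp only [mem_fixingSubgroup_iff, Set.mem_univ, true_implies, Subgroup.mem_bot]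
  exact ⟨fun h => eq_of_smul_eq_smul (α := X) (by simpa using h), fun h => by simp [h]⟩

end MulAction

section InitialSegment

variable {G : Type*} [Group G] {d : ℕ} [MulAction G (Fin d)]

variable (G d) in
def fixingSubgroupIio (k : ℕ) : Subgroup G :=
  fixingSubgroup G {j : Fin d | (j : ℕ) < k}

@[simp]
theorem fixingSubgroupIio_zero : fixingSubgroupIio G d 0 = ⊤ := by
  simp [fixingSubgroupIio]

theorem fixingSubgroupIio_antitone : Antitone (fixingSubgroupIio G d) :=
  fun _ _ hkl => fixingSubgroup_antitone G (Fin d) fun _ (hj : _ < _) => hj.trans_le hkl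

theorem fixingSubgroupIio_succ (i : Fin d) :
    fixingSubgroupIio G d (i + 1) = stabilizer G i ⊓ fixingSubgroupIio G d i := by
  rw [fixingSubgroupIio, fixingSubgroupIio, ← fixingSubgroup_insert]
  congr 1
  ext j
  simp [le_iff_eq_or_lt, Fin.val_inj]

theorem fixingSubgroupIio_one (hd : 0 < d) :
    fixingSubgroupIio G d 1 = stabilizer G (⟨0, hd⟩ : Fin d) := by
  simpa using fixingSubgroupIio_succ (G := G) (⟨0, hd⟩ : Fin d)

theorem fixingSubgroupIio_self [FaithfulSMul G (Fin d)] : fixingSubgroupIio G d d = ⊥ := by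
  simp [fixingSubgroupIio, fixingSubgroup_univ]

end InitialSegment

/-- If `G ≤ S_d` is a transitive permutation group, then there is a chain of
subgroups `G = H_0 ≥ H_1 ≥ ... ≥ H_d = ⊥` with `[H_0 : H_1] = d` and `[H_i : H_{i+1}] < d`
for all `i = 1, ..., d-1`. -/
theorem stmt1 (d : ℕ) (hd : 0 < d) (G : Subgroup (Equiv.Perm (Fin d)))
    (htrans : ∀ x y : Fin d, ∃ g ∈ G, g x = y) :
    ∃ H : Fin (d + 1) → Subgroup ↥G,
      H 0 = ⊤ ∧ H (Fin.last d) = ⊥ ∧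
      (∀ i j : Fin (d + 1), i ≤ j → H j ≤ H i) ∧
      (H 1).relIndex (H 0) = d ∧
      ∀ i : Fin d, (i : ℕ) ≠ 0 → (H i.succ).relIndex (H i.castSucc) < d := by
  have : IsPretransitive G (Fin d) :=
    ⟨fun x y => let ⟨g, hg, hgy⟩ := htrans x y; ⟨⟨g, hg⟩, hgy⟩⟩
  refine ⟨fun k => fixingSubgroupIio G d k, fixingSubgroupIio_zero, fixingSubgroupIio_self,
    fun i j hij => fixingSubgroupIio_antitone (Fin.val_le_of_le hij), ?_, fun i hi => ?_⟩
  · dsimp only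
    rw [Fin.val_one', Nat.one_mod_eq_one.mpr (by omega), fixingSubgroupIio_one hd,
      Fin.val_zero, fixingSubgroupIio_zero, Subgroup.relIndex_top_right,
      index_stabilizer_of_transitive, Nat.card_fin]
  · have hfix : fixingSubgroupIio G d i ≤ stabilizer G (⟨0, hd⟩ : Fin d) :=
      (fixingSubgroupIio_antitone (Nat.one_le_iff_ne_zero.mpr hi)).trans
        (fixingSubgroupIio_one hd).le
    dsimp only
    rw [Fin.val_succ, Fin.val_castSucc, fixingSubgroupIio_succ, relIndex_stabilizer_inf]
    simpa only [Nat.card_fin] using ncard_orbit_lt_of_le_stabilizer hfix (Fin.ne_of_val_ne hi)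
end

section
/- Let G be a finite simple group and H < G a proper subgroup of index d = [G : H]. Then there exists a chain of subgroups G = H_0 ≥ H_1 = H ≥ H_2 ≥ ... ≥ H_d = {id} such that [H_0 : H_1] > [H_i : H_{i+1}] for all i = 1, ..., d-1. -/
/-!
Number the cosets of `H` as `x₀ = H, x₁, …, x_{d-1}` and let `H_k` be the pointwise stabilizer
of `x₀, …, x_{k-1}` under the action of `G` on `G ⧸ H`. Then `H_0 = G`, `H_1 = H`, and `H_d` is the
kernel of the action, i.e. the normal core of `H`, which is trivial since `G` is simple.
For `k ≥ 1`, `[H_k : H_{k+1}]` is the size of the `H_k`-orbit of `x_k`; this orbit misses the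
fixed point `x₀ ≠ x_k`, so it has fewer than `d` elements.
-/

open MulAction

section FixingSubgroup

variable (G : Type*) {X : Type*} [Group G] [MulAction G X]

theorem fixingSubgroup_insert (x : X) (s : Set X) :
    fixingSubgroup G (insert x s) = fixingSubgroup G s ⊓ stabilizer G x := by
  ext g
  simp [mem_fixingSubgroup_iff, and_comm]

theorem fixingSubgroup_singleton (x : X) : fixingSubgroup G {x} = stabilizer G x := by
  simpa using fixingSubgroup_insert G x ∅

theorem fixingSubgroup_univ : fixingSubgroup G (Set.univ : Set X) = (toPermHom G X).ker := by
  ext g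
  simp [mem_fixingSubgroup_iff, Equiv.ext_iff]

theorem relIndex_fixingSubgroup_insert_lt_card [Finite X] {s : Set X} {x y : X}
    (hy : y ∈ s) (hxy : x ≠ y) :
    (fixingSubgroup G (insert x s)).relIndex (fixingSubgroup G s) < Nat.card X := by
  set K := fixingSubgroup G s
  have hstab : (stabilizer G x).subgroupOf K = stabilizer K x := rfl
  have hy_notMem : y ∉ orbit K x := by
    rintro ⟨k, hk⟩
    have hky : (k : G) • y = y := (mem_fixingSubgroup_iff G).mp k.2 y hy
    exact hxy (smul_left_cancel (k : G) (hk.trans hky.symm))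
  rw [fixingSubgroup_insert, Subgroup.inf_relIndex_left, Subgroup.relIndex, hstab,
    index_stabilizer, ← Set.ncard_univ]
  exact Set.ncard_lt_ncard (Set.ssubset_univ_iff.mpr fun h ↦ hy_notMem (h ▸ trivial))
    Set.finite_univ

end FixingSubgroup

theorem Finite.exists_equiv_fin_apply_eq {X : Type*} [Finite X] {n : ℕ} (hn : Nat.card X = n)
    (x : X) (i : Fin n) : ∃ f : X ≃ Fin n, f x = i := by
  let e := Finite.equivFinOfCardEq hn
  exact ⟨e.trans (Equiv.swap (e x) i), by simp⟩

theorem setOf_val_lt_succ {X : Type*} {n : ℕ} (f : X ≃ Fin n) (i : Fin n) :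
    {x | (f x : ℕ) < i + 1} = insert (f.symm i) {x | (f x : ℕ) < i} := by
  ext x
  simp only [Set.mem_ofPred_eq, Set.mem_insert_iff, Nat.lt_succ_iff_lt_or_eq, Equiv.eq_symm_apply,
    Fin.val_inj, or_comm]

theorem Subgroup.normalCore_eq_bot_of_ne_top {G : Type*} [Group G] [IsSimpleGroup G]
    {H : Subgroup G} (hH : H ≠ ⊤) : H.normalCore = ⊥ :=
  H.normalCore_normal.eq_bot_or_eq_top.resolve_right fun h ↦
    hH (top_le_iff.mp (h ▸ H.normalCore_le))

/-- If `G` is a finite simple group and `H < G` has index `d`, then there is a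
chain of subgroups `G = H_0 ≥ H_1 = H ≥ H_2 ≥ ... ≥ H_d = ⊥` with
`[H_0 : H_1] = d > [H_i : H_{i+1}]` for all `i = 1, ..., d-1`. -/
theorem stmt2 (G : Type*) [Group G] [Finite G] [IsSimpleGroup G]
    (H : Subgroup G) (hH : H < ⊤) (d : ℕ) (hd : d = H.index) :
    ∃ C : Fin (d + 1) → Subgroup G,
      C 0 = ⊤ ∧ C 1 = H ∧ C (Fin.last d) = ⊥ ∧
      (∀ i j : Fin (d + 1), i ≤ j → C j ≤ C i) ∧
      (C 1).relIndex (C 0) = d ∧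
      ∀ i : Fin d, (i : ℕ) ≠ 0 → (C i.succ).relIndex (C i.castSucc) < d := by
  have hd1 : 1 < d := hd ▸ Subgroup.one_lt_index_of_ne_top hH.ne
  have hcard : Nat.card (G ⧸ H) = d := hd.symm
  obtain ⟨f, hf⟩ := Finite.exists_equiv_fin_apply_eq hcard ((1 : G) : G ⧸ H) ⟨0, by omega⟩
  let C : Fin (d + 1) → Subgroup G := fun k ↦ fixingSubgroup G {x | (f x : ℕ) < k}
  have hC0 : C 0 = ⊤ := by simp [C]
  have hC1 : C 1 = H := by
    have : {x | (f x : ℕ) < (1 : Fin (d + 1))} = {((1 : G) : G ⧸ H)} := by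
      ext x
      rw [Set.mem_ofPred_eq, Set.mem_singleton_iff, ← f.injective.eq_iff, hf, Fin.ext_iff,
        Fin.val_one', Nat.mod_eq_of_lt (by omega), Nat.lt_one_iff]
    simp only [C, this, fixingSubgroup_singleton, stabilizer_quotient]
  refine ⟨C, hC0, hC1, ?_, ?_, by rw [hC0, hC1, Subgroup.relIndex_top_right, hd], ?_⟩
  · simpa [C, fixingSubgroup_univ, ← Subgroup.normalCore_eq_ker] using
      Subgroup.normalCore_eq_bot_of_ne_top hH.ne
  · exact fun i j hij ↦ fixingSubgroup_antitone G _ fun _ hx ↦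
      lt_of_lt_of_le hx (Fin.le_iff_val_le_val.mp hij)
  · intro i hi
    have h0 : ((1 : G) : G ⧸ H) ∈ {x | (f x : ℕ) < i} := by
      rw [Set.mem_ofPred_eq, hf]; exact Nat.pos_of_ne_zero hi
    have hne : f.symm i ≠ ((1 : G) : G ⧸ H) := by
      rw [Ne, Equiv.symm_apply_eq, hf]; exact fun h ↦ hi (congrArg Fin.val h)
    simpa only [C, Fin.val_succ, Fin.val_castSucc, setOf_val_lt_succ, hcard] using
      relIndex_fixingSubgroup_insert_lt_card G h0 hne
end

section
/- Let G ≤ S_d be a transitive permutation group on {1,...,d}. If G contains a subgroup of the form S_k × S_{d-k} (the stabilizer of the partition {1,...,k} ⊔ {k+1,...,d}, acting fully on each block) for some 1 ≤ k < d/2, then G = S_d. -/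
/-!
The stabilizer of a subset `s` with `0 < |s| < |sᶜ|` is a maximal subgroup of the symmetric
group (the intransitive case of the O'Nan–Scott classification). A transitive group cannot equal
this intransitive stabilizer, so a transitive group containing it is the whole symmetric group.
-/

open scoped Pointwise
open MulAction Equiv

theorem Equiv.Perm.eq_top_of_stabilizer_le_of_transitive {α : Type*} [Finite α]
    {s : Set α} (hs : s.Nonempty) (hcard : s.ncard < sᶜ.ncard) {G : Subgroup (Perm α)}
    (hsG : stabilizer (Perm α) s ≤ G) (htrans : ∀ x y : α, ∃ g ∈ G, g x = y) :
    G = ⊤ := by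
  refine hsG.lt_or_eq.elim ((isCoatom_stabilizer_of_ncard_lt_ncard_compl hs hcard).2 G) ?_
  intro hGs
  exfalso
  obtain ⟨a, ha⟩ := hs
  obtain ⟨b, hb⟩ : sᶜ.Nonempty := Set.nonempty_of_ncard_ne_zero (by omega)
  obtain ⟨g, hgG, rfl⟩ := htrans a b
  rw [← hGs, mem_stabilizer_iff] at hgG
  exact hb (hgG ▸ Set.smul_mem_smul_set ha)

theorem Fin.ncard_setOf_val_lt {d k : ℕ} (hkd : k ≤ d) :
    {i : Fin d | (i : ℕ) < k}.ncard = k := by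
  rw [← Fin.range_castLE hkd, ← Set.image_univ,
    Set.ncard_image_of_injective _ (Fin.castLE_injective hkd)]
  simp

/-- Let `G ≤ S_d` be transitive. If `G` contains the subgroup
`S_k × S_{d-k}` (the setwise stabilizer of the block `{1,...,k}`) for some `1 ≤ k < d/2`,
then `G = S_d`. -/
theorem stmt5 (d k : ℕ) (hk : 1 ≤ k) (hk' : 2 * k < d)
    (G : Subgroup (Equiv.Perm (Fin d)))
    (htrans : ∀ x y : Fin d, ∃ g ∈ G, g x = y)
    (hsub : MulAction.stabilizer (Equiv.Perm (Fin d))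
        ({i : Fin d | (i : ℕ) < k} : Set (Fin d)) ≤ G) :
    G = ⊤ := by
  set B : Set (Fin d) := {i : Fin d | (i : ℕ) < k}
  have hB : B.ncard = k := Fin.ncard_setOf_val_lt (by omega)
  have hBc : B.ncard + Bᶜ.ncard = d := by
    rw [Set.ncard_add_ncard_compl, Nat.card_eq_fintype_card, Fintype.card_fin]
  have hB_nonempty : B.Nonempty := ⟨⟨0, by omega⟩, hk⟩
  exact Perm.eq_top_of_stabilizer_le_of_transitive hB_nonempty (by omega) hsub htrans
end

section
/- For any finite group G and any normal subgroup N ⊴ G, the Galois width satisfies B(G) = max(B(G/N), B(N)). -/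
/-- A maximal (unrefinable) chain of subgroups of `G` from `⊤` down to `⊥`: each step is
strict and admits no subgroup strictly in between. -/
def IsMaximalSubgroupChain {G : Type*} [Group G] {n : ℕ} (H : Fin (n + 1) → Subgroup G) : Prop :=
  H 0 = ⊤ ∧ H (Fin.last n) = ⊥ ∧
    ∀ i : Fin n, H i.succ < H i.castSucc ∧
      ∀ K : Subgroup G, ¬(H i.succ < K ∧ K < H i.castSucc)

/-- The cost of a chain of subgroups: the maximum of the relative indices of its steps. -/
noncomputable def chainCost {G : Type*} [Group G] {n : ℕ} (H : Fin (n + 1) → Subgroup G) : ℕ :=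
  Finset.univ.sup fun i : Fin n => (H i.succ).relIndex (H i.castSucc)

/-- The Galois width of a group `G`: the minimum cost over all maximal chains of subgroups. -/
noncomputable def galoisWidth (G : Type*) [Group G] : ℕ :=
  sInf {c : ℕ | ∃ (n : ℕ) (H : Fin (n + 1) → Subgroup G), IsMaximalSubgroupChain H ∧ chainCost H = c}

/-!
A maximal chain of cost at most `c` is the same thing as a path from `⊥` to `⊤` along covers
`A ⋖ B` of index at most `c`, and in a finite group any inclusion `A ≤ B` of index at most `c`
refines to such a path. The images in `G ⧸ N` and the intersections with `N` of an optimal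
chain of `G` have steps of index at most the original ones, so refining them gives
`B(G ⧸ N) ≤ B(G)` and `B(N) ≤ B(G)`. Conversely, the correspondence theorem lifts an optimal
chain of `G ⧸ N` to a path from `N` to `⊤`, and an optimal chain of `N` is a path from `⊥` to
`N`, both with the same covers and indices; concatenating them gives `B(G) ≤ max`.
-/

open Relation Subgroup

namespace Relation

variable {α : Type*} {r : α → α → Prop}

theorem reflTransGen_of_fin_chain {n : ℕ} (H : Fin (n + 1) → α)
    (h : ∀ i : Fin n, r (H i.succ) (H i.castSucc)) : ReflTransGen r (H (Fin.last n)) (H 0) := by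
  induction n with
  | zero => exact .refl
  | succ n ih =>
    rw [← Fin.succ_last]
    exact .head (h (Fin.last n)) (ih (H ∘ Fin.castSucc) fun i => h i.castSucc)

theorem ReflTransGen.exists_fin_chain {a b : α} (hab : ReflTransGen r a b) :
    ∃ (n : ℕ) (H : Fin (n + 1) → α), H 0 = b ∧ H (Fin.last n) = a ∧
      ∀ i : Fin n, r (H i.succ) (H i.castSucc) := by
  induction hab using ReflTransGen.head_induction_on with
  | refl => exact ⟨0, fun _ => b, rfl, rfl, Fin.elim0⟩
  | @head a c hac _ ih =>
    obtain ⟨n, H, h0, hlast, hstep⟩ := ih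
    refine ⟨n + 1, Fin.snoc H a, by simpa using h0, by simp, Fin.lastCases ?_ fun i => ?_⟩
    · simpa [hlast] using hac
    · rw [Fin.succ_castSucc, Fin.snoc_castSucc, Fin.snoc_castSucc]; exact hstep i

end Relation

theorem CovBy.coe_orderIso_subtype {α β : Type*} [PartialOrder α] [PartialOrder β]
    {p : β → Prop} (hp : {x | p x}.OrdConnected) (e : α ≃o Subtype p) {a b : α} (h : a ⋖ b) :
    (e a : β) ⋖ e b :=
  ((apply_covBy_apply_iff e).2 h).image (OrderEmbedding.subtype p) (by simpa using hp)

namespace Subgroup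

variable {G G' : Type*} [Group G] [Group G']

theorem comap_mk'_covBy_comap_mk' (N : Subgroup G) [N.Normal] {A B : Subgroup (G ⧸ N)}
    (h : A ⋖ B) : A.comap (QuotientGroup.mk' N) ⋖ B.comap (QuotientGroup.mk' N) :=
  h.coe_orderIso_subtype Set.ordConnected_Ici (QuotientGroup.comapMk'OrderIso N)

theorem map_subtype_covBy_map_subtype (N : Subgroup G) {A B : Subgroup N}
    (h : A ⋖ B) : A.map N.subtype ⋖ B.map N.subtype :=
  h.coe_orderIso_subtype Set.ordConnected_Iic (MapSubtype.orderIso N)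

theorem relIndex_comap_comap_of_surjective {f : G →* G'} (hf : Function.Surjective f)
    (A B : Subgroup G') : (A.comap f).relIndex (B.comap f) = A.relIndex B := by
  rw [relIndex_comap, map_comap_eq_self_of_surjective hf]

theorem relIndex_map_map_dvd (f : G →* G') (A B : Subgroup G) :
    (A.map f).relIndex (B.map f) ∣ A.relIndex B := by
  rw [← relIndex_comap]
  exact relIndex_dvd_of_le_left _ (le_comap_map f A)

theorem relIndex_comap_comap_le (f : G' →* G) {A B : Subgroup G} (h : A.relIndex B ≠ 0) :
    (A.comap f).relIndex (B.comap f) ≤ A.relIndex B := by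
  rw [relIndex_comap]
  exact relIndex_le_of_le_right (map_comap_le f B) h

end Subgroup

section GaloisWidth

variable {G G' : Type*} [Group G] [Group G']

def CovByWithIndexLE (c : ℕ) (A B : Subgroup G) : Prop :=
  A ⋖ B ∧ A.relIndex B ≤ c

theorem exists_maximalSubgroupChain_chainCost_le_iff {c : ℕ} :
    (∃ (n : ℕ) (H : Fin (n + 1) → Subgroup G), IsMaximalSubgroupChain H ∧ chainCost H ≤ c) ↔
      ReflTransGen (CovByWithIndexLE c) (⊥ : Subgroup G) ⊤ := by
  constructor
  · rintro ⟨n, H, ⟨h0, hlast, hstep⟩, hcost⟩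
    rw [← h0, ← hlast]
    refine reflTransGen_of_fin_chain H fun i =>
      ⟨⟨(hstep i).1, fun K h₁ h₂ => (hstep i).2 K ⟨h₁, h₂⟩⟩, ?_⟩
    exact Finset.sup_le_iff.1 hcost i (Finset.mem_univ i)
  · intro h
    obtain ⟨n, H, h0, hlast, hstep⟩ := h.exists_fin_chain
    exact ⟨n, H, ⟨h0, hlast, fun i => ⟨(hstep i).1.lt, fun K hK => (hstep i).1.2 hK.1 hK.2⟩⟩,
      Finset.sup_le fun i _ => (hstep i).2⟩

theorem reflTransGen_covByWithIndexLE_of_le [Finite G] {c : ℕ} {A B : Subgroup G} (hAB : A ≤ B)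
    (hc : A.relIndex B ≤ c) : ReflTransGen (CovByWithIndexLE c) A B := by
  induction B using WellFoundedLT.induction with
  | _ B ih =>
  obtain rfl | hlt := hAB.eq_or_lt
  · exact .refl
  obtain ⟨K, hAK, hKB⟩ := exists_le_covBy_of_lt hlt
  have hmul : A.relIndex K * K.relIndex B = A.relIndex B := relIndex_mul_relIndex A K B hAK hKB.le
  have hpos : 0 < A.relIndex B := Nat.pos_of_ne_zero index_ne_zero_of_finite
  exact .tail (ih K hKB.lt hAK ((Nat.le_of_dvd hpos (Dvd.intro _ hmul)).trans hc))
    ⟨hKB, (Nat.le_of_dvd hpos (Dvd.intro_left _ hmul)).trans hc⟩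

theorem galoisWidth_le_iff [Finite G] {c : ℕ} :
    galoisWidth G ≤ c ↔ ReflTransGen (CovByWithIndexLE c) (⊥ : Subgroup G) ⊤ := by
  rw [← exists_maximalSubgroupChain_chainCost_le_iff]
  constructor
  · intro hc
    have hne : {c : ℕ | ∃ (n : ℕ) (H : Fin (n + 1) → Subgroup G),
        IsMaximalSubgroupChain H ∧ chainCost H = c}.Nonempty := by
      obtain ⟨n, H, hH, -⟩ := exists_maximalSubgroupChain_chainCost_le_iff.2
        (reflTransGen_covByWithIndexLE_of_le (G := G) bot_le le_rfl)
      exact ⟨_, n, H, hH, rfl⟩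
    obtain ⟨n, H, hH, hcost⟩ := Nat.sInf_mem hne
    exact ⟨n, H, hH, hcost.trans_le hc⟩
  · rintro ⟨n, H, hH, hcost⟩
    exact (Nat.sInf_le ⟨n, H, hH, rfl⟩ : galoisWidth G ≤ chainCost H).trans hcost

theorem galoisWidth_le_of_map [Finite G] [Finite G'] (φ : Subgroup G → Subgroup G')
    (hφ : Monotone φ) (hbot : φ ⊥ = ⊥) (htop : φ ⊤ = ⊤)
    (hindex : ∀ A B : Subgroup G, A ≤ B → (φ A).relIndex (φ B) ≤ A.relIndex B) :
    galoisWidth G' ≤ galoisWidth G := by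
  have hG := (galoisWidth_le_iff (G := G)).1 le_rfl
  rw [galoisWidth_le_iff, ← hbot, ← htop]
  refine ReflTransGen.lift' φ (fun A B hAB => ?_) ⊥ ⊤ hG
  exact reflTransGen_covByWithIndexLE_of_le (hφ hAB.1.le) ((hindex A B hAB.1.le).trans hAB.2)

theorem galoisWidth_le_of_surjective [Finite G] {f : G →* G'} (hf : Function.Surjective f) :
    galoisWidth G' ≤ galoisWidth G :=
  have : Finite G' := Finite.of_surjective f hf
  galoisWidth_le_of_map (map f) (fun _ _ => map_mono) (map_bot f) (map_top_of_surjective f hf)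
    fun A B _ => Nat.le_of_dvd (Nat.pos_of_ne_zero index_ne_zero_of_finite)
      (relIndex_map_map_dvd f A B)

theorem galoisWidth_subgroup_le [Finite G] (K : Subgroup G) : galoisWidth K ≤ galoisWidth G :=
  galoisWidth_le_of_map (comap K.subtype) (fun _ _ => comap_mono) (bot_subgroupOf K)
    (top_subgroupOf K) fun _ _ _ => relIndex_comap_comap_le K.subtype index_ne_zero_of_finite

theorem CovByWithIndexLE.map_subtype {N : Subgroup G} {c : ℕ} {A B : Subgroup N}
    (h : CovByWithIndexLE c A B) : CovByWithIndexLE c (A.map N.subtype) (B.map N.subtype) :=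
  ⟨map_subtype_covBy_map_subtype N h.1,
    (relIndex_map_map_of_injective A B N.subtype_injective).trans_le h.2⟩

theorem CovByWithIndexLE.comap_mk' {N : Subgroup G} [N.Normal] {c : ℕ} {A B : Subgroup (G ⧸ N)}
    (h : CovByWithIndexLE c A B) :
    CovByWithIndexLE c (A.comap (QuotientGroup.mk' N)) (B.comap (QuotientGroup.mk' N)) :=
  ⟨comap_mk'_covBy_comap_mk' N h.1,
    (relIndex_comap_comap_of_surjective (QuotientGroup.mk'_surjective N) A B).trans_le h.2⟩

theorem galoisWidth_le_max [Finite G] (N : Subgroup G) [N.Normal] :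
    galoisWidth G ≤ max (galoisWidth (G ⧸ N)) (galoisWidth N) := by
  set c := max (galoisWidth (G ⧸ N)) (galoisWidth N)
  have hquot : ReflTransGen (CovByWithIndexLE c) (⊥ : Subgroup (G ⧸ N)) ⊤ :=
    galoisWidth_le_iff.1 (le_max_left _ _)
  have hsub : ReflTransGen (CovByWithIndexLE c) (⊥ : Subgroup N) ⊤ :=
    galoisWidth_le_iff.1 (le_max_right _ _)
  have hlow : ReflTransGen (CovByWithIndexLE c) ⊥ N := by
    simpa [Function.onFun, ← MonoidHom.range_eq_map] using
      ReflTransGen.lift (map N.subtype) (fun _ _ h => h.map_subtype) ⊥ ⊤ hsub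
  have hhigh : ReflTransGen (CovByWithIndexLE c) N ⊤ := by
    simpa [Function.onFun] using
      ReflTransGen.lift (comap (QuotientGroup.mk' N)) (fun _ _ h => h.comap_mk') ⊥ ⊤ hquot
  exact galoisWidth_le_iff.2 (hlow.trans hhigh)

end GaloisWidth

/-- For a finite group `G` and a normal subgroup `N ⊴ G`, the Galois width
satisfies `B(G) = max (B(G/N)) (B(N))`. -/
theorem stmt7 (G : Type*) [Group G] [Finite G] (N : Subgroup G) [N.Normal] :
    galoisWidth G = max (galoisWidth (G ⧸ N)) (galoisWidth ↥N) :=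
  (galoisWidth_le_max N).antisymm <| max_le
    (galoisWidth_le_of_surjective (QuotientGroup.mk'_surjective N)) (galoisWidth_subgroup_le N)
end

section
/- Let G be a group with subgroups H_{i+1} ≤ H_i ≤ G and a normal subgroup N ⊴ G, all of finite index. Then [H_i : H_{i+1}] = [H_i ∩ N : H_{i+1} ∩ N] · [N H_i : N H_{i+1}]. -/
/-!
Both sides of the identity, multiplied by `[H₂ : H₂ ∩ N]`, compute `[H₁ : H₂ ∩ N]`: on the left
through `H₂`, on the right through `H₁ ∩ N`. The second isomorphism theorem turns
`[H : H ∩ N]` into `[N H : N]`, and the tower `N ≤ N H₂ ≤ N H₁` splits `[N H₁ : N]`; cancelling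
the finite index `[N H₂ : N]` gives the formula.
-/

namespace Subgroup

variable {G : Type*} [Group G] {N H₁ H₂ : Subgroup G}

theorem inf_relIndex_inf_mul_relIndex_of_le (h : H₂ ≤ H₁) :
    (H₂ ⊓ N).relIndex (H₁ ⊓ N) * N.relIndex H₁ = N.relIndex H₂ * H₂.relIndex H₁ := by
  rw [← inf_relIndex_left H₁ N, relIndex_mul_relIndex _ _ _ (inf_le_inf_right N h) inf_le_left,
    ← inf_relIndex_left H₂ N, relIndex_mul_relIndex _ _ _ inf_le_left h]

theorem relIndex_eq_relIndex_mul_relIndex_sup [N.Normal] (h : H₂ ≤ H₁) :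
    N.relIndex H₁ = N.relIndex H₂ * (N ⊔ H₂).relIndex (N ⊔ H₁) := by
  rw [← relIndex_sup_left H₁ N, ← relIndex_sup_left H₂ N,
    relIndex_mul_relIndex _ _ _ le_sup_left (sup_le_sup_left h N)]

theorem relIndex_eq_inf_relIndex_inf_mul_sup_relIndex_sup [N.Normal] (hN : N.relIndex H₂ ≠ 0)
    (h : H₂ ≤ H₁) :
    H₂.relIndex H₁ = (H₂ ⊓ N).relIndex (H₁ ⊓ N) * (N ⊔ H₂).relIndex (N ⊔ H₁) := by
  apply mul_left_cancel₀ hN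
  rw [← inf_relIndex_inf_mul_relIndex_of_le h, relIndex_eq_relIndex_mul_relIndex_sup h]
  ring

end Subgroup

theorem stmt9_general (G : Type*) [Group G] (N H₁ H₂ : Subgroup G) [N.Normal]
    [N.FiniteIndex] (h : H₂ ≤ H₁) :
    H₂.relIndex H₁ = (H₂ ⊓ N).relIndex (H₁ ⊓ N) * (N ⊔ H₂).relIndex (N ⊔ H₁) :=
  Subgroup.relIndex_eq_inf_relIndex_inf_mul_sup_relIndex_sup
    Subgroup.isFiniteRelIndex_of_finiteIndex.relIndex_ne_zero h

/-- For subgroups `H₂ ≤ H₁` of `G` and a normal subgroup `N ⊴ G`, all of finite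
index, `[H₁ : H₂] = [H₁ ∩ N : H₂ ∩ N] · [N H₁ : N H₂]`. -/
theorem stmt9 (G : Type*) [Group G] (N H₁ H₂ : Subgroup G) [N.Normal]
    [H₁.FiniteIndex] [H₂.FiniteIndex] [N.FiniteIndex] (h : H₂ ≤ H₁) :
    H₂.relIndex H₁ = (H₂ ⊓ N).relIndex (H₁ ⊓ N) * (N ⊔ H₂).relIndex (N ⊔ H₁) :=
  stmt9_general G N H₁ H₂ h
end

section
/- If G is a finite simple group, then its Galois width equals its minimal faithful permutation degree: B(G) = μ(G). -/
/-- The minimal faithful permutation degree of a group `G`: the least `d` such that `G` embeds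
into the symmetric group `S_d`. -/
noncomputable def minFaithfulDegree (G : Type*) [Group G] : ℕ :=
  sInf {d : ℕ | ∃ φ : G →* Equiv.Perm (Fin d), Function.Injective φ}

/-!
A faithful action of `G` on `d` points bounds the width from above: a nontrivial subgroup `H`
moves some point, whose stabiliser in `H` is proper of index at most `d` (orbit–stabiliser);
enlarging it to a maximal subgroup of `H` only divides the index, so descending from `G` one
maximal step at a time gives a maximal chain of cost at most `d`. Conversely, when `G` is
simple the first step `H₁` of any maximal chain is a proper subgroup with trivial normal core,
so `G` acts faithfully on `G ⧸ H₁` and `μ(G) ≤ [G : H₁]` is at most the cost of the chain.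
-/

theorem exists_covBy_chain_to_bot {α : Type*} [PartialOrder α] [OrderBot α] [WellFoundedLT α]
    (P : α → α → Prop) (hP : ∀ x, x ≠ ⊥ → ∃ y, y ⋖ x ∧ P y x) (x : α) :
    ∃ (n : ℕ) (C : Fin (n + 1) → α), C 0 = x ∧ C (Fin.last n) = ⊥ ∧
      ∀ i : Fin n, C i.succ ⋖ C i.castSucc ∧ P (C i.succ) (C i.castSucc) := by
  induction x using WellFoundedLT.induction with
  | _ x ih =>
  by_cases hx : x = ⊥
  · exact ⟨0, fun _ => x, rfl, hx, fun i => i.elim0⟩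
  obtain ⟨y, hyx, hPy⟩ := hP x hx
  obtain ⟨n, C, hC0, hCl, hC⟩ := ih y hyx.lt
  refine ⟨n + 1, Fin.cons x C, rfl, by simpa [← Fin.succ_last] using hCl, Fin.cases ?_ fun i => ?_⟩
  · simpa [hC0] using And.intro hyx hPy
  · simpa [← Fin.succ_castSucc] using hC i

namespace Subgroup

variable {G α : Type*} [Group G] [MulAction G α] [Finite α]

theorem exists_lt_relIndex_le_card [FaithfulSMul G α] {H : Subgroup G} (hH : H ≠ ⊥) :
    ∃ K < H, K.relIndex H ≤ Nat.card α := by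
  obtain ⟨⟨h, hh⟩, h1⟩ := (ne_bot_iff_exists_ne_one (H := H)).mp hH
  obtain ⟨x, hx⟩ : ∃ x : α, h • x ≠ x := by
    by_contra! hfix
    exact h1 (Subtype.ext (MulAction.fixedBy_eq_univ_iff_eq_one.mp (Set.eq_univ_of_forall hfix)))
  refine ⟨MulAction.stabilizer G x ⊓ H, lt_of_le_of_ne inf_le_right fun he => hx ?_, ?_⟩
  · rw [← he] at hh
    exact hh.1
  · have hstab : (MulAction.stabilizer G x).subgroupOf H = MulAction.stabilizer H x := by
      ext; rfl
    rw [inf_relIndex_right, relIndex, hstab, MulAction.index_stabilizer]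
    exact Set.ncard_le_card _

theorem exists_covBy_relIndex_le_card [Finite G] [FaithfulSMul G α] {H : Subgroup G}
    (hH : H ≠ ⊥) : ∃ K, K ⋖ H ∧ K.relIndex H ≤ Nat.card α := by
  obtain ⟨K, hKH, hK⟩ := exists_lt_relIndex_le_card (α := α) hH
  obtain ⟨M, hKM, hMH⟩ := exists_le_covBy_of_lt hKH
  exact ⟨M, hMH, (Nat.le_of_dvd (Nat.pos_of_ne_zero index_ne_zero_of_finite)
    (relIndex_dvd_of_le_left H hKM)).trans hK⟩

end Subgroup

theorem isMaximalSubgroupChain_iff {G : Type*} [Group G] {n : ℕ} {H : Fin (n + 1) → Subgroup G} :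
    IsMaximalSubgroupChain H ↔
      H 0 = ⊤ ∧ H (Fin.last n) = ⊥ ∧ ∀ i : Fin n, H i.succ ⋖ H i.castSucc := by
  simp only [IsMaximalSubgroupChain, CovBy, not_and]

section

variable {G α : Type*} [Group G] [MulAction G α] [Finite α] [FaithfulSMul G α]

theorem exists_isMaximalSubgroupChain_chainCost_le_card [Finite G] :
    ∃ (n : ℕ) (H : Fin (n + 1) → Subgroup G),
      IsMaximalSubgroupChain H ∧ chainCost H ≤ Nat.card α := by
  obtain ⟨n, H, hH0, hHl, hH⟩ := exists_covBy_chain_to_bot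
    (fun K L : Subgroup G => K.relIndex L ≤ Nat.card α)
    (fun _ => Subgroup.exists_covBy_relIndex_le_card) ⊤
  exact ⟨n, H, isMaximalSubgroupChain_iff.2 ⟨hH0, hHl, fun i => (hH i).1⟩,
    Finset.sup_le fun i _ => (hH i).2⟩

theorem galoisWidth_le_card [Finite G] : galoisWidth G ≤ Nat.card α := by
  obtain ⟨n, H, hH, hcost⟩ := exists_isMaximalSubgroupChain_chainCost_le_card (G := G) (α := α)
  unfold galoisWidth
  exact le_trans (Nat.sInf_le ⟨n, H, hH, rfl⟩) hcost

variable (G α) in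
theorem exists_injective_hom_perm_fin_card :
    ∃ φ : G →* Equiv.Perm (Fin (Nat.card α)), Function.Injective φ :=
  ⟨(Finite.equivFin α).permCongrHom.toMonoidHom.comp (MulAction.toPermHom G α),
    (Finite.equivFin α).permCongrHom.injective.comp MulAction.toPerm_injective⟩

theorem minFaithfulDegree_le_card : minFaithfulDegree G ≤ Nat.card α := by
  unfold minFaithfulDegree
  exact Nat.sInf_le (exists_injective_hom_perm_fin_card G α)

end

theorem galoisWidth_le_minFaithfulDegree {G : Type*} [Group G] [Finite G] :
    galoisWidth G ≤ minFaithfulDegree G := by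
  obtain ⟨φ, hφ⟩ : ∃ φ : G →* Equiv.Perm (Fin (minFaithfulDegree G)), Function.Injective φ :=
    Nat.sInf_mem (s := {d | ∃ φ : G →* Equiv.Perm (Fin d), Function.Injective φ})
      ⟨_, exists_injective_hom_perm_fin_card G G⟩
  let _ : MulAction G (Fin (minFaithfulDegree G)) := MulAction.compHom _ φ
  have : FaithfulSMul G (Fin (minFaithfulDegree G)) := ⟨fun h => hφ (Equiv.ext h)⟩
  simpa using galoisWidth_le_card (G := G) (α := Fin (minFaithfulDegree G))

namespace IsSimpleGroup

variable {G : Type*} [Group G] [IsSimpleGroup G]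

theorem faithfulSMul_quotient {K : Subgroup G} (hK : K ≠ ⊤) : FaithfulSMul G (G ⧸ K) := by
  have hker : (MulAction.toPermHom G (G ⧸ K)).ker = ⊥ := by
    rw [← Subgroup.normalCore_eq_ker]
    refine (eq_bot_or_eq_top_of_normal _ K.normalCore_normal).resolve_right fun h => hK ?_
    exact eq_top_iff.2 (h ▸ K.normalCore_le)
  exact ⟨fun h => (MonoidHom.ker_eq_bot_iff _).1 hker (Equiv.ext h)⟩

theorem minFaithfulDegree_le_index {K : Subgroup G} [K.FiniteIndex] (hK : K ≠ ⊤) :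
    minFaithfulDegree G ≤ K.index :=
  haveI := faithfulSMul_quotient hK
  minFaithfulDegree_le_card

theorem minFaithfulDegree_le_chainCost [Finite G] {n : ℕ} {H : Fin (n + 1) → Subgroup G}
    (hH : IsMaximalSubgroupChain H) : minFaithfulDegree G ≤ chainCost H := by
  obtain ⟨hH0, hHl, hstep⟩ := isMaximalSubgroupChain_iff.1 hH
  cases n with
  | zero => exact absurd (hH0.symm.trans hHl) top_ne_bot
  | succ n =>
    have hfirst : H 1 ⋖ ⊤ := by simpa [hH0] using hstep 0
    calc minFaithfulDegree G ≤ (H 1).index := minFaithfulDegree_le_index hfirst.ne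
      _ = (H (0 : Fin (n + 1)).succ).relIndex (H (0 : Fin (n + 1)).castSucc) := by
        simp [hH0, Subgroup.relIndex_top_right]
      _ ≤ chainCost H := Finset.le_sup (f := fun i : Fin (n + 1) =>
          (H i.succ).relIndex (H i.castSucc)) (Finset.mem_univ _)

theorem minFaithfulDegree_le_galoisWidth [Finite G] : minFaithfulDegree G ≤ galoisWidth G := by
  obtain ⟨n, H, hH, -⟩ := exists_isMaximalSubgroupChain_chainCost_le_card (G := G) (α := G)
  refine le_csInf ⟨_, n, H, hH, rfl⟩ ?_
  rintro _ ⟨m, K, hK, rfl⟩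
  exact minFaithfulDegree_le_chainCost hK

end IsSimpleGroup

/-- For a finite simple group `G`, the Galois width equals the minimal
faithful permutation degree: `B(G) = μ(G)`. -/
theorem stmt11 (G : Type*) [Group G] [Finite G] [IsSimpleGroup G] :
    galoisWidth G = minFaithfulDegree G :=
  le_antisymm galoisWidth_le_minFaithfulDegree IsSimpleGroup.minFaithfulDegree_le_galoisWidth
end

section
/- For n ≥ 5, the Galois width of the symmetric group S_n equals n. -/
/-! In `S_n` the pointwise stabilizers of `0, 1, …, i - 1` form a maximal chain: each step is the
stabilizer of one more point, so it has index at most `n`, and it is maximal because the smaller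
group still contains every transposition of the remaining moved points, so it acts transitively on
them. Conversely, any chain from `S_n` to `1` has a step `H_i > H_{i+1}` with `A_n ≤ H_i` but
`A_n ≰ H_{i+1}`; then `A_n ⊓ H_{i+1}` is a proper subgroup of the simple group `A_n`, and the action
on its cosets embeds `A_n` into `S_k` with `k` its index, which forces `n!/2 ≤ k!`, i.e. `k ≥ n`. -/

open Equiv MulAction Subgroup
open scoped Nat

theorem IsSimpleGroup.card_dvd_factorial_index {G : Type*} [Group G] [IsSimpleGroup G] [Finite G]
    {K : Subgroup G} (hK : K ≠ ⊤) : Nat.card G ∣ K.index ! := by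
  have hcore : K.normalCore = ⊥ :=
    (IsSimpleGroup.eq_bot_or_eq_top_of_normal _ K.normalCore_normal).resolve_right
      fun h ↦ hK (top_le_iff.mp (h ▸ K.normalCore_le))
  rw [← index_bot, ← hcore, normalCore_eq_ker, index_ker, index_eq_card, ← Nat.card_perm]
  exact card_subgroup_dvd_card _

theorem alternatingGroup.card_le_index_of_ne_top {α : Type*} [Fintype α] [DecidableEq α]
    (hα : 5 ≤ Nat.card α) {K : Subgroup (alternatingGroup α)} (hK : K ≠ ⊤) :
    Nat.card α ≤ K.index := by
  have := alternatingGroup.isSimpleGroup hα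
  have : Nontrivial α := Finite.one_lt_card_iff_nontrivial.mp (by omega)
  have hcard := two_mul_nat_card_alternatingGroup (α := α)
  rw [Nat.card_perm] at hcard
  by_contra! hlt
  have hdvd : Nat.card (alternatingGroup α) ∣ (Nat.card α - 1)! :=
    (IsSimpleGroup.card_dvd_factorial_index hK).trans
      (Nat.factorial_dvd_factorial (Nat.le_sub_one_of_lt hlt))
  have hle := Nat.le_of_dvd (Nat.factorial_pos _) hdvd
  have : Nat.card α * (Nat.card α - 1)! ≤ 2 * (Nat.card α - 1)! := by
    rw [Nat.mul_factorial_pred (by omega), ← hcard]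
    omega
  have := Nat.le_of_mul_le_mul_right this (Nat.factorial_pos _)
  omega

theorem Fin.exists_castSucc_and_not_succ {m : ℕ} (P : Fin (m + 1) → Prop) (h0 : P 0)
    (hlast : ¬P (Fin.last m)) : ∃ i : Fin m, P i.castSucc ∧ ¬P i.succ := by
  induction m with
  | zero => exact absurd h0 hlast
  | succ m ih =>
    by_cases hm : P (Fin.last m).castSucc
    · exact ⟨Fin.last m, hm, by rwa [Fin.succ_last]⟩
    · obtain ⟨i, h1, h2⟩ := ih (fun j ↦ P j.castSucc) h0 hm
      exact ⟨i.castSucc, h1, by rwa [Fin.succ_castSucc]⟩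

theorem le_chainCost_of_le_index {G : Type*} [Group G] [Finite G] {m k : ℕ}
    {H : Fin (m + 1) → Subgroup G} (h0 : H 0 = ⊤) (hlast : H (Fin.last m) = ⊥)
    {A : Subgroup G} (hA : A ≠ ⊥) (hk : ∀ K : Subgroup A, K ≠ ⊤ → k ≤ K.index) :
    k ≤ chainCost H := by
  obtain ⟨i, hle, hnle⟩ := Fin.exists_castSucc_and_not_succ (fun j ↦ A ≤ H j)
    (by simp [h0]) (by simpa [hlast] using hA)
  calc k ≤ ((H i.succ).subgroupOf A).index := hk _ (mt subgroupOf_eq_top.mp hnle)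
    _ ≤ (H i.succ).relIndex (H i.castSucc) := relIndex_le_of_le_right hle index_ne_zero_of_finite
    _ ≤ chainCost H := Finset.le_sup (f := fun i : Fin m ↦ (H i.succ).relIndex (H i.castSucc))
      (Finset.mem_univ i)

theorem relIndex_inf_stabilizer_le_card {G X : Type*} [Group G] [MulAction G X] [Finite X]
    (H : Subgroup G) (p : X) : (H ⊓ stabilizer G p).relIndex H ≤ Nat.card X := by
  have hstab : (stabilizer G p).subgroupOf H = stabilizer H p := by
    ext σ
    simp [mem_subgroupOf, mem_stabilizer_iff, Subgroup.smul_def]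
  rw [inf_relIndex_left, relIndex, hstab, index_stabilizer]
  exact Set.ncard_le_card _

theorem le_of_inf_stabilizer_lt {G X : Type*} [Group G] [MulAction G X] {H K : Subgroup G}
    {p : X} (htrans : ∀ σ ∈ H, ∀ τ ∈ H, σ • p ≠ p → τ • p ≠ p →
      ∃ s ∈ H ⊓ stabilizer G p, s • σ • p = τ • p)
    (hlt : H ⊓ stabilizer G p < K) (hle : K ≤ H) : H ≤ K := by
  obtain ⟨σ, hσK, hσ⟩ := SetLike.exists_of_lt hlt
  have hσp : σ • p ≠ p := fun h ↦ hσ ⟨hle hσK, h⟩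
  intro τ hτ
  by_cases hτp : τ • p = p
  · exact hlt.le ⟨hτ, hτp⟩
  obtain ⟨s, hs, hsσ⟩ := htrans σ (hle hσK) τ hτ hσp hτp
  have hrest : (s * σ)⁻¹ * τ ∈ H ⊓ stabilizer G p :=
    mem_inf.mpr ⟨mul_mem (inv_mem (mul_mem (mem_inf.mp hs).1 (hle hσK))) hτ, by
      rw [mem_stabilizer_iff, mul_smul, inv_smul_eq_iff, mul_smul, hsσ]⟩
  have := mul_mem (mul_mem (hlt.le hs) hσK) (hlt.le hrest)
  rwa [mul_inv_cancel_left] at this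

def fixingFirst (n i : ℕ) : Subgroup (Perm (Fin n)) :=
  fixingSubgroup (Perm (Fin n)) {x : Fin n | (x : ℕ) < i}

section fixingFirst

variable {n i : ℕ} {σ : Perm (Fin n)}

theorem mem_fixingFirst : σ ∈ fixingFirst n i ↔ ∀ x : Fin n, (x : ℕ) < i → σ x = x := by
  simp [fixingFirst, mem_fixingSubgroup_iff, Perm.smul_def]

theorem fixingFirst_zero : fixingFirst n 0 = ⊤ := by
  ext σ
  simp [mem_fixingFirst]

theorem fixingFirst_last (m : ℕ) : fixingFirst (m + 1) m = ⊥ := by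
  ext σ
  refine ⟨fun hσ ↦ ?_, fun h ↦ by simp_all⟩
  rw [mem_fixingFirst] at hσ
  suffices hlast : σ (Fin.last m) = Fin.last m by
    ext x
    rcases (Fin.le_last x).lt_or_eq with hx | rfl
    exacts [congrArg Fin.val (hσ x hx), congrArg Fin.val hlast]
  by_contra hne
  have hlt : (σ (Fin.last m) : ℕ) < m := Fin.val_lt_last hne
  exact hne (σ.injective (hσ _ hlt))

theorem fixingFirst_succ (hi : i < n) :
    fixingFirst n (i + 1) = fixingFirst n i ⊓ stabilizer (Perm (Fin n)) (⟨i, hi⟩ : Fin n) := by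
  ext σ
  simp only [mem_inf, mem_fixingFirst, mem_stabilizer_iff, Perm.smul_def, Nat.lt_succ_iff_lt_or_eq,
    or_imp, forall_and]
  refine and_congr_right fun _ ↦ ⟨fun h ↦ h _ rfl, ?_⟩
  rintro h x rfl
  exact h

theorem lt_apply_of_mem_fixingFirst (hi : i < n) (hσ : σ ∈ fixingFirst n i)
    (hne : σ ⟨i, hi⟩ ≠ ⟨i, hi⟩) : i < σ ⟨i, hi⟩ := by
  rw [mem_fixingFirst] at hσ
  by_contra! hle
  rcases hle.lt_or_eq with hlt | heq
  · exact hne (σ.injective (hσ _ hlt))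
  · exact hne (Fin.ext heq)

theorem fixingFirst_succ_lt (hi : i + 1 < n) : fixingFirst n (i + 1) < fixingFirst n i := by
  rw [fixingFirst_succ (by omega)]
  refine inf_le_left.lt_of_ne fun h ↦ ?_
  have hswap : swap (⟨i, by omega⟩ : Fin n) ⟨i + 1, hi⟩ ∈ fixingFirst n i :=
    mem_fixingFirst.mpr fun x hx ↦ swap_apply_of_ne_of_ne
      (Fin.ne_of_val_ne (by dsimp; omega)) (Fin.ne_of_val_ne (by dsimp; omega))
  have := (h ▸ hswap : _ ∈ fixingFirst n i ⊓ _).2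
  simp [mem_stabilizer_iff, Perm.smul_def] at this

theorem le_of_fixingFirst_succ_lt (hi : i < n) {K : Subgroup (Perm (Fin n))}
    (hlt : fixingFirst n (i + 1) < K) (hle : K ≤ fixingFirst n i) : fixingFirst n i ≤ K := by
  rw [fixingFirst_succ hi] at hlt
  refine le_of_inf_stabilizer_lt (fun σ hσ τ hτ hσp hτp ↦ ?_) hlt hle
  rw [Perm.smul_def] at hσp hτp ⊢
  have hσi := lt_apply_of_mem_fixingFirst hi hσ hσp
  have hτi := lt_apply_of_mem_fixingFirst hi hτ hτp
  refine ⟨swap (σ ⟨i, hi⟩) (τ ⟨i, hi⟩), ?_, swap_apply_left _ _⟩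
  rw [← fixingFirst_succ hi, mem_fixingFirst]
  exact fun x hx ↦
    swap_apply_of_ne_of_ne (Fin.ne_of_val_ne (by omega)) (Fin.ne_of_val_ne (by omega))

theorem isMaximalSubgroupChain_fixingFirst (m : ℕ) :
    IsMaximalSubgroupChain fun j : Fin (m + 1) ↦ fixingFirst (m + 1) j := by
  refine ⟨fixingFirst_zero, fixingFirst_last m, fun i ↦ ⟨fixingFirst_succ_lt (by simp), ?_⟩⟩
  rintro K ⟨hlt, hK⟩
  exact hK.not_ge (le_of_fixingFirst_succ_lt (by simp) hlt hK.le)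

theorem chainCost_fixingFirst_le (m : ℕ) :
    chainCost (fun j : Fin (m + 1) ↦ fixingFirst (m + 1) j) ≤ m + 1 :=
  Finset.sup_le fun i _ ↦ by
    simpa [fixingFirst_succ (Nat.lt_succ_of_lt i.isLt)] using
      relIndex_inf_stabilizer_le_card (fixingFirst (m + 1) i) (⟨i, by omega⟩ : Fin (m + 1))

end fixingFirst

/-- For `n ≥ 5`, the Galois width of the symmetric group `S_n` equals `n`. -/
theorem stmt14 (n : ℕ) (hn : 5 ≤ n) : galoisWidth (Equiv.Perm (Fin n)) = n := by
  obtain ⟨m, rfl⟩ : ∃ m, n = m + 1 := ⟨n - 1, by omega⟩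
  have hmax := isMaximalSubgroupChain_fixingFirst m
  unfold galoisWidth
  refine le_antisymm (le_trans (Nat.sInf_le ⟨m, _, hmax, rfl⟩) (chainCost_fixingFirst_le m))
    (le_csInf ⟨_, m, _, hmax, rfl⟩ ?_)
  rintro c ⟨k, H, ⟨h0, hlast, -⟩, rfl⟩
  have : Nontrivial (alternatingGroup (Fin (m + 1))) :=
    alternatingGroup.nontrivial_of_three_le_card (by simp; omega)
  refine le_chainCost_of_le_index h0 hlast ((nontrivial_iff_ne_bot _).mp this) fun K hK ↦ ?_
  simpa using alternatingGroup.card_le_index_of_ne_top (by simpa using hn) hK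
end

section
/- Galois width is monotone under taking subgroups: for any finite group G and any subgroup H ≤ G, one has B(H) ≤ B(G). -/
/-!
Intersecting a maximal chain of `G` of cost `c` with a subgroup `H` gives a (possibly
non-maximal) chain of `H` from `H` to `1` whose steps still have index at most `c`, because
`[B ⊓ H : A ⊓ H] ≤ [B : A]`. In a finite group every inclusion `A ≤ B` refines to a maximal
chain whose indices divide `[B : A]`, so refining each step yields a maximal chain of `H` of
cost at most `c`.
-/

open Subgroup

/-- Pairs are ordered (larger, smaller), so a `RelSeries` of this relation runs downward,
like a chain in `IsMaximalSubgroupChain`. -/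
def boundedIndexCovBy (Γ : Type*) [Group Γ] (c : ℕ) : SetRel (Subgroup Γ) (Subgroup Γ) :=
  {x | x.2 ⋖ x.1 ∧ x.2.relIndex x.1 ≤ c}

section Chains

variable {Γ : Type*} [Group Γ] {c : ℕ}

theorem isMaximalSubgroupChain_of_relSeries (p : RelSeries (boundedIndexCovBy Γ c))
    (hhead : p.head = ⊤) (hlast : p.last = ⊥) : IsMaximalSubgroupChain p.toFun := by
  unfold IsMaximalSubgroupChain
  exact ⟨hhead, hlast, fun i => ⟨(p.step i).1.lt, fun _ hK => (p.step i).1.2 hK.1 hK.2⟩⟩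

theorem relIndex_le_chainCost {n : ℕ} (H : Fin (n + 1) → Subgroup Γ) (i : Fin n) :
    (H i.succ).relIndex (H i.castSucc) ≤ chainCost H :=
  Finset.le_sup (f := fun i : Fin n => (H i.succ).relIndex (H i.castSucc)) (Finset.mem_univ i)

theorem chainCost_relSeries_le (p : RelSeries (boundedIndexCovBy Γ c)) : chainCost p.toFun ≤ c :=
  Finset.sup_le fun i _ => (p.step i).2

theorem galoisWidth_le_of_relSeries (p : RelSeries (boundedIndexCovBy Γ c))
    (hhead : p.head = ⊤) (hlast : p.last = ⊥) : galoisWidth Γ ≤ c :=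
  le_trans
    (Nat.sInf_le ⟨p.length, p.toFun, isMaximalSubgroupChain_of_relSeries p hhead hlast, rfl⟩)
    (chainCost_relSeries_le p)

theorem IsMaximalSubgroupChain.exists_relSeries {n : ℕ} {H : Fin (n + 1) → Subgroup Γ}
    (hH : IsMaximalSubgroupChain H) :
    ∃ p : RelSeries (boundedIndexCovBy Γ (chainCost H)), p.head = ⊤ ∧ p.last = ⊥ :=
  ⟨⟨n, H, fun i => ⟨⟨(hH.2.2 i).1, fun K h₁ h₂ => (hH.2.2 i).2 K ⟨h₁, h₂⟩⟩,
    relIndex_le_chainCost H i⟩⟩,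
    hH.1, hH.2.1⟩

end Chains

section Finite

variable {Γ : Type*} [Group Γ] [Finite Γ]

theorem exists_relSeries_boundedIndexCovBy {c : ℕ} {A B : Subgroup Γ} (hAB : A ≤ B)
    (hc : A.relIndex B ≤ c) :
    ∃ p : RelSeries (boundedIndexCovBy Γ c), p.head = B ∧ p.last = A := by
  induction A using WellFoundedGT.induction with
  | _ A ih =>
    rcases hAB.eq_or_lt with rfl | hlt
    · exact ⟨RelSeries.singleton _ A, rfl, rfl⟩
    obtain ⟨C, hAC, hCB⟩ := exists_covBy_le_of_lt hlt
    have hne : A.relIndex B ≠ 0 := index_ne_zero_of_finite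
    obtain ⟨p, hp_head, hp_last⟩ :=
      ih C hAC.lt hCB ((relIndex_le_of_le_left hAC.le hne).trans hc)
    have hstep : (p.last, A) ∈ boundedIndexCovBy Γ c :=
      hp_last ▸ ⟨hAC, (relIndex_le_of_le_right hCB hne).trans hc⟩
    exact ⟨p.snoc A hstep, by simpa using hp_head, by simp⟩

theorem exists_relSeries_galoisWidth :
    ∃ p : RelSeries (boundedIndexCovBy Γ (galoisWidth Γ)), p.head = ⊤ ∧ p.last = ⊥ := by
  obtain ⟨p, hhead, hlast⟩ :=
    exists_relSeries_boundedIndexCovBy (c := (⊥ : Subgroup Γ).relIndex ⊤) bot_le le_rfl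
  obtain ⟨n, H, hH, hcost⟩ : galoisWidth Γ ∈ _ :=
    Nat.sInf_mem ⟨_, p.length, p.toFun, isMaximalSubgroupChain_of_relSeries p hhead hlast, rfl⟩
  exact hcost ▸ hH.exists_relSeries

end Finite

theorem relIndex_comap_le_relIndex {G K : Type*} [Group G] [Group K] [Finite G] (f : K →* G)
    (A B : Subgroup G) : (A.comap f).relIndex (B.comap f) ≤ A.relIndex B := by
  rw [relIndex_comap]
  exact relIndex_le_of_le_right (map_comap_le f B) index_ne_zero_of_finite

theorem exists_relSeries_comap {G K : Type*} [Group G] [Group K] [Finite G] [Finite K]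
    (f : K →* G) {c : ℕ} (p : RelSeries (boundedIndexCovBy G c)) :
    ∃ q : RelSeries (boundedIndexCovBy K c),
      q.head = p.head.comap f ∧ q.last = p.last.comap f := by
  induction p using RelSeries.inductionOn with
  | singleton A => exact ⟨RelSeries.singleton _ (A.comap f), rfl, rfl⟩
  | cons p B hB ih =>
    obtain ⟨q, hq_head, hq_last⟩ := ih
    obtain ⟨r, hr_head, hr_last⟩ := exists_relSeries_boundedIndexCovBy
      (comap_mono hB.1.le) ((relIndex_comap_le_relIndex f _ _).trans hB.2)
    exact ⟨r.smash q (hr_last.trans hq_head.symm), by simpa using hr_head,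
      by simpa using hq_last⟩

theorem galoisWidth_le_of_injective {G K : Type*} [Group G] [Group K] [Finite G] (f : K →* G)
    (hf : Function.Injective f) : galoisWidth K ≤ galoisWidth G := by
  have : Finite K := Finite.of_injective f hf
  obtain ⟨p, hhead, hlast⟩ := exists_relSeries_galoisWidth (Γ := G)
  obtain ⟨q, hq_head, hq_last⟩ := exists_relSeries_comap f p
  refine galoisWidth_le_of_relSeries q ?_ ?_
  · rw [hq_head, hhead, comap_top]
  · rw [hq_last, hlast, MonoidHom.comap_bot, (MonoidHom.ker_eq_bot_iff f).mpr hf]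

/-- Galois width is monotone under taking subgroups: for any finite group `G`
and subgroup `H ≤ G`, `B(H) ≤ B(G)`. -/
theorem stmt16 (G : Type*) [Group G] [Finite G] (H : Subgroup G) :
    galoisWidth ↥H ≤ galoisWidth G :=
  galoisWidth_le_of_injective H.subtype H.subtype_injective
end
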